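/- Let μ ∈ ℝⁿ and σ > 0, and let g be a random vector in ℝⁿ whose coordinates g_i are independent with g_i ~ N(μ_i, σ²). Let e be a random vector in ℝⁿ, independent of g, with i.i.d. coordinates uniform on [-Δ/2, Δ/2], and define g̃ = g + ‖g‖_∞ · e. Then the excess variance of the dithered quantization satisfies E[‖g̃ − μ‖₂²] − E[‖g − μ‖₂²] ≤ (Δ²/3)·ln(√2·n)·E[‖g − μ‖₂²] + (nΔ²/6)·‖μ‖_∞². -/

import Mathlib

/-!
Expanding the square, the cross term `2 (gᵢ - μᵢ) ‖g‖∞ eᵢ` has mean zero because `e` is centred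
and independent of `g`, so the excess variance is exactly `n (Δ²/12) E‖g‖∞²`. To bound the
expected maximum, Jensen's inequality for `exp` gives `E‖g‖∞² ≤ 4σ² log E exp(‖g‖∞²/(4σ²))`, and
`exp(‖g‖∞²/(4σ²)) ≤ ∑ᵢ exp(gᵢ²/(4σ²))`. Multiplying the density of `N(m, σ²)` by `exp(x²/(4σ²))`
gives `√2 exp(m²/(2σ²))` times the density of `N(2m, 2σ²)`, so each summand has mean
`√2 exp(μᵢ²/(2σ²))`. Hence `E‖g‖∞² ≤ 4σ² log(√2 n) + 2‖μ‖∞²`, and `E‖g - μ‖₂² = nσ²`.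
-/

open MeasureTheory ProbabilityTheory

/-- The uniform probability distribution on the interval `[a, b]`. -/
noncomputable def uniformIcc (a b : ℝ) : Measure ℝ := volume[|Set.Icc a b]

open Real
open scoped NNReal ENNReal

lemma gaussianPDFReal_mul_exp_sq_div (m : ℝ) (v : ℝ≥0) (x : ℝ) :
    gaussianPDFReal m v x * exp (x ^ 2 / (4 * v))
      = √2 * exp (m ^ 2 / (2 * v)) * gaussianPDFReal (2 * m) (2 * v) x := by
  have hsqrt : √(2 * π * ↑(2 * v)) = √2 * √(2 * π * v) := by
    rw [← sqrt_mul zero_le_two]; push_cast; ring_nf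
  have hexp : -(x - m) ^ 2 / (2 * v) + x ^ 2 / (4 * v)
      = m ^ 2 / (2 * v) + -(x - 2 * m) ^ 2 / (2 * ↑(2 * v)) := by
    push_cast; field_simp; ring
  simp only [gaussianPDFReal, hsqrt, mul_inv]
  rw [mul_assoc, ← exp_add, hexp, exp_add]
  field_simp

lemma integrable_exp_sq_div_gaussianReal (m : ℝ) {v : ℝ≥0} (hv : v ≠ 0) :
    Integrable (fun x => exp (x ^ 2 / (4 * v))) (gaussianReal m v) := by
  rw [gaussianReal_of_var_ne_zero m hv, integrable_withDensity_iff_integrable_smul'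
    (measurable_gaussianPDF m v) (ae_of_all _ fun _ => gaussianPDF_lt_top)]
  simp only [toReal_gaussianPDF, smul_eq_mul, gaussianPDFReal_mul_exp_sq_div m v]
  exact (integrable_gaussianPDFReal _ _).const_mul _

lemma integral_exp_sq_div_gaussianReal (m : ℝ) {v : ℝ≥0} (hv : v ≠ 0) :
    ∫ x, exp (x ^ 2 / (4 * v)) ∂gaussianReal m v = √2 * exp (m ^ 2 / (2 * v)) := by
  simp only [integral_gaussianReal_eq_integral_smul hv, smul_eq_mul,
    gaussianPDFReal_mul_exp_sq_div m v, integral_const_mul,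
    integral_gaussianPDFReal_eq_one _ (mul_ne_zero two_ne_zero hv), mul_one]

lemma integral_sub_sq_gaussianReal (m : ℝ) (v : ℝ≥0) :
    ∫ x, (x - m) ^ 2 ∂gaussianReal m v = v := by
  rw [← variance_id_gaussianReal (μ := m), variance_eq_integral aemeasurable_id]
  simp [integral_id_gaussianReal]

lemma uniformIcc_eq (a b : ℝ) :
    uniformIcc a b = (ENNReal.ofReal (b - a))⁻¹ • volume.restrict (Set.Icc a b) := by
  rw [uniformIcc, ProbabilityTheory.cond, Real.volume_Icc]

lemma integral_uniformIcc {a b : ℝ} (hab : a ≤ b) (f : ℝ → ℝ) :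
    ∫ x, f x ∂uniformIcc a b = (b - a)⁻¹ * ∫ x in a..b, f x := by
  rw [uniformIcc_eq, integral_smul_measure, ENNReal.toReal_inv,
    ENNReal.toReal_ofReal (sub_nonneg.2 hab), smul_eq_mul,
    intervalIntegral.integral_of_le hab, integral_Icc_eq_integral_Ioc]

lemma memLp_id_uniformIcc {a b : ℝ} (hab : a < b) : MemLp id 2 (uniformIcc a b) := by
  refine (memLp_two_iff_integrable_sq aestronglyMeasurable_id).2 ?_
  rw [uniformIcc_eq]
  refine Integrable.smul_measure ?_ (by simpa using hab)
  exact (continuous_pow 2).integrableOn_Icc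

lemma integral_id_uniformIcc_neg (a : ℝ) : ∫ x, x ∂uniformIcc (-a) a = 0 := by
  rcases le_or_gt 0 a with ha | ha
  · simp [integral_uniformIcc (neg_le_self ha)]
  · simp [uniformIcc_eq, Set.Icc_eq_empty_of_lt (show a < -a by linarith)]

lemma integral_sq_uniformIcc_neg {a : ℝ} (ha : 0 < a) :
    ∫ x, x ^ 2 ∂uniformIcc (-a) a = a ^ 2 / 3 := by
  rw [integral_uniformIcc (by linarith), integral_pow]
  field_simp
  ring

section RandomVariables

variable {Ω 𝓧 : Type*} [MeasurableSpace Ω] [MeasurableSpace 𝓧] {P : Measure Ω}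

lemma ProbabilityTheory.HasLaw.memLp_comp {E : Type*} [NormedAddCommGroup E] {X : Ω → 𝓧}
    {ν : Measure 𝓧} (hX : HasLaw X ν P) {f : 𝓧 → E} {p : ℝ≥0∞} (hf : MemLp f p ν) :
    MemLp (fun ω => f (X ω)) p P :=
  (hX.map_eq ▸ hf).comp_of_map hX.aemeasurable

lemma ProbabilityTheory.HasLaw.integrable_comp {E : Type*} [NormedAddCommGroup E] {X : Ω → 𝓧}
    {ν : Measure 𝓧} (hX : HasLaw X ν P) {f : 𝓧 → E} (hf : Integrable f ν) :
    Integrable (fun ω => f (X ω)) P :=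
  (hX.map_eq ▸ hf).comp_aemeasurable hX.aemeasurable

lemma ProbabilityTheory.IndepFun.memLp_two_mul {X Z : Ω → ℝ} (hXZ : IndepFun X Z P)
    (hX : MemLp X 2 P) (hZ : MemLp Z 2 P) : MemLp (fun ω => X ω * Z ω) 2 P := by
  refine (memLp_two_iff_integrable_sq (hX.1.mul hZ.1)).2 ?_
  refine ((hXZ.comp (φ := (· ^ 2)) (ψ := (· ^ 2)) (measurable_id.pow_const 2)
    (measurable_id.pow_const 2)).integrable_mul hX.integrable_sq hZ.integrable_sq).congr
    (ae_of_all _ fun ω => ?_)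
  simp only [Pi.mul_apply, Function.comp_apply, mul_pow]

lemma integral_le_log_integral_exp [IsProbabilityMeasure P] {Y : Ω → ℝ} (hY : Integrable Y P)
    (hexpY : Integrable (fun ω => exp (Y ω)) P) :
    ∫ ω, Y ω ∂P ≤ log (∫ ω, exp (Y ω) ∂P) := by
  rw [le_log_iff_exp_le (integral_exp_pos hexpY)]
  exact convexOn_exp.map_integral_le continuous_exp.continuousOn isClosed_univ
    (ae_of_all _ fun _ => Set.mem_univ _) hY hexpY

end RandomVariables

lemma Pi.exists_norm_eq_norm_apply {ι : Type*} [Fintype ι] [Nonempty ι] {E : ι → Type*}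
    [∀ i, SeminormedAddCommGroup (E i)] (x : ∀ i, E i) : ∃ i, ‖x‖ = ‖x i‖ := by
  obtain ⟨i, -, hi⟩ := Finset.exists_mem_eq_sup Finset.univ Finset.univ_nonempty (‖x ·‖₊)
  exact ⟨i, by rw [← coe_nnnorm, Pi.nnnorm_def, hi, coe_nnnorm]⟩

lemma exp_norm_sq_div_le_sum {ι : Type*} [Fintype ι] [Nonempty ι] (x : ι → ℝ) (c : ℝ) :
    exp (‖x‖ ^ 2 / c) ≤ ∑ i, exp (x i ^ 2 / c) := by
  obtain ⟨i, hi⟩ := Pi.exists_norm_eq_norm_apply x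
  rw [hi, Real.norm_eq_abs, sq_abs]
  exact Finset.single_le_sum (f := fun i => exp (x i ^ 2 / c)) (fun _ _ => (exp_pos _).le)
    (Finset.mem_univ i)

section Dithering

variable {Ω α ι : Type*} [MeasurableSpace Ω] [MeasurableSpace α] [Fintype ι] {P : Measure Ω}
  [IsProbabilityMeasure P]

lemma integral_sq_add_mul_of_indepFun {Y : Ω → α} {E : Ω → ℝ} (hYE : IndepFun Y E P)
    {f h : α → ℝ} (hf : Measurable f) (hh : Measurable h)
    (hfY : MemLp (fun ω => f (Y ω)) 2 P) (hhY : MemLp (fun ω => h (Y ω)) 2 P)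
    (hE : MemLp E 2 P) (hE₀ : ∫ ω, E ω ∂P = 0) :
    ∫ ω, (f (Y ω) + h (Y ω) * E ω) ^ 2 ∂P
      = ∫ ω, f (Y ω) ^ 2 ∂P + (∫ ω, h (Y ω) ^ 2 ∂P) * ∫ ω, E ω ^ 2 ∂P := by
  have hcross : IndepFun (fun ω => f (Y ω) * h (Y ω)) E P :=
    hYE.comp (φ := fun y => f y * h y) (hf.mul hh) measurable_id
  have hquad : IndepFun (fun ω => h (Y ω) ^ 2) (fun ω => E ω ^ 2) P :=
    hYE.comp (φ := fun y => h y ^ 2) (hh.pow_const 2) (measurable_id.pow_const 2)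
  have hcross_int : Integrable (fun ω => f (Y ω) * h (Y ω) * E ω) P :=
    hcross.integrable_mul (hfY.integrable_mul hhY) (hE.integrable one_le_two)
  have hquad_int : Integrable (fun ω => h (Y ω) ^ 2 * E ω ^ 2) P :=
    hquad.integrable_mul hhY.integrable_sq hE.integrable_sq
  calc ∫ ω, (f (Y ω) + h (Y ω) * E ω) ^ 2 ∂P
      = ∫ ω, f (Y ω) ^ 2 + 2 * (f (Y ω) * h (Y ω) * E ω) + h (Y ω) ^ 2 * E ω ^ 2 ∂P := by
        congr 1 with ω; ring
    _ = ∫ ω, f (Y ω) ^ 2 ∂P + 2 * ((∫ ω, f (Y ω) * h (Y ω) ∂P) * ∫ ω, E ω ∂P)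
          + (∫ ω, h (Y ω) ^ 2 ∂P) * ∫ ω, E ω ^ 2 ∂P := by
        rw [integral_add _ hquad_int, integral_add hfY.integrable_sq (hcross_int.const_mul 2),
          integral_const_mul, hcross.integral_fun_mul_eq_mul_integral (hfY.1.mul hhY.1) hE.1,
          hquad.integral_fun_mul_eq_mul_integral (hhY.1.pow 2) (hE.1.pow 2)]
        exact hfY.integrable_sq.add (hcross_int.const_mul 2)
    _ = _ := by rw [hE₀]; ring

lemma integral_sum_sq_add_norm_mul_of_indepFun {g e : Ω → ι → ℝ}
    (hge : IndepFun g e P) (hg : ∀ i, MemLp (fun ω => g ω i) 2 P)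
    (he : ∀ i, MemLp (fun ω => e ω i) 2 P) (he₀ : ∀ i, ∫ ω, e ω i ∂P = 0) {s : ℝ}
    (he₂ : ∀ i, ∫ ω, e ω i ^ 2 ∂P = s) (μ : ι → ℝ) :
    ∫ ω, ∑ i, (g ω i + ‖g ω‖ * e ω i - μ i) ^ 2 ∂P
      = ∫ ω, ∑ i, (g ω i - μ i) ^ 2 ∂P + Fintype.card ι * s * ∫ ω, ‖g ω‖ ^ 2 ∂P := by
  have hgμ i : MemLp (fun ω => g ω i - μ i) 2 P := (hg i).sub (memLp_const _)
  have hnorm : MemLp (fun ω => ‖g ω‖) 2 P := (MemLp.of_eval hg).norm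
  have hgei i : IndepFun g (fun ω => e ω i) P := hge.comp measurable_id (measurable_pi_apply i)
  have hcoord i : ∫ ω, (g ω i + ‖g ω‖ * e ω i - μ i) ^ 2 ∂P
      = ∫ ω, (g ω i - μ i) ^ 2 ∂P + (∫ ω, ‖g ω‖ ^ 2 ∂P) * s := by
    rw [← he₂ i, ← integral_sq_add_mul_of_indepFun (hgei i) (f := fun v => v i - μ i)
      (by fun_prop) measurable_norm (hgμ i) hnorm (he i) (he₀ i)]
    congr 1 with ω; ring
  have hcoord_int i : Integrable (fun ω => (g ω i + ‖g ω‖ * e ω i - μ i) ^ 2) P := by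
    have hprod : MemLp (fun ω => ‖g ω‖ * e ω i) 2 P :=
      ((hgei i).comp measurable_norm measurable_id).memLp_two_mul hnorm (he i)
    refine (((hg i).add hprod).sub (memLp_const (μ i))).integrable_sq.congr
      (ae_of_all _ fun ω => ?_)
    simp only [Pi.add_apply, Pi.sub_apply]
  rw [integral_finsetSum _ fun i _ => hcoord_int i,
    integral_finsetSum _ fun i _ => (hgμ i).integrable_sq]
  simp only [hcoord, Finset.sum_add_distrib, Finset.sum_const, Finset.card_univ, nsmul_eq_mul]
  ring

end Dithering

section GaussianVector

variable {Ω ι : Type*} [MeasurableSpace Ω] [Fintype ι] {P : Measure Ω} [IsProbabilityMeasure P]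
  {g : Ω → ι → ℝ} {μ : ι → ℝ} {v : ℝ≥0}

lemma integral_sum_sub_sq_of_hasLaw_gaussianReal
    (hg : ∀ i, HasLaw (fun ω => g ω i) (gaussianReal (μ i) v) P) :
    ∫ ω, ∑ i, (g ω i - μ i) ^ 2 ∂P = Fintype.card ι * v := by
  have hint i : Integrable (fun ω => (g ω i - μ i) ^ 2) P :=
    (((hg i).memLp_comp (memLp_id_gaussianReal 2)).sub (memLp_const _)).integrable_sq
  have hvar i : ∫ ω, (g ω i - μ i) ^ 2 ∂P = v := by
    rw [← integral_sub_sq_gaussianReal (μ i), ← (hg i).integral_comp (by fun_prop)]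
    rfl
  simp only [integral_finsetSum _ fun i _ => hint i, hvar, Finset.sum_const, Finset.card_univ,
    nsmul_eq_mul]

lemma integral_norm_sq_le_of_hasLaw_gaussianReal [Nonempty ι]
    (hv : v ≠ 0) (hg : ∀ i, HasLaw (fun ω => g ω i) (gaussianReal (μ i) v) P) :
    ∫ ω, ‖g ω‖ ^ 2 ∂P ≤ 4 * v * log (√2 * Fintype.card ι) + 2 * ‖μ‖ ^ 2 := by
  have hgL2 : MemLp g 2 P := MemLp.of_eval fun i => (hg i).memLp_comp (memLp_id_gaussianReal 2)
  have hexp i : Integrable (fun ω => exp (g ω i ^ 2 / (4 * v))) P :=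
    (hg i).integrable_comp (integrable_exp_sq_div_gaussianReal (μ i) hv)
  have hY : Integrable (fun ω => ‖g ω‖ ^ 2 / (4 * v)) P := hgL2.norm.integrable_sq.div_const _
  have hexpY : Integrable (fun ω => exp (‖g ω‖ ^ 2 / (4 * v))) P := by
    refine (integrable_finsetSum Finset.univ fun i _ => hexp i).mono'
      (continuous_exp.comp_aestronglyMeasurable hY.1) (ae_of_all _ fun ω => ?_)
    rw [Real.norm_of_nonneg (exp_pos _).le]
    exact exp_norm_sq_div_le_sum (g ω) _
  have hmoment : ∫ ω, ∑ i, exp (g ω i ^ 2 / (4 * v)) ∂P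
      ≤ √2 * Fintype.card ι * exp (‖μ‖ ^ 2 / (2 * v)) := by
    rw [integral_finsetSum _ fun i _ => hexp i]
    calc ∑ i, ∫ ω, exp (g ω i ^ 2 / (4 * v)) ∂P = ∑ i, √2 * exp (μ i ^ 2 / (2 * v)) := by
          refine Finset.sum_congr rfl fun i _ => ?_
          rw [← integral_exp_sq_div_gaussianReal (μ i) hv,
            ← (hg i).integral_comp (f := fun x => exp (x ^ 2 / (4 * v))) (by fun_prop)]
          rfl
      _ ≤ ∑ _i : ι, √2 * exp (‖μ‖ ^ 2 / (2 * v)) := by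
          gcongr ∑ _i, _ * exp (?_ / _) with i
          exact sq_le_sq.2 ((norm_le_pi_norm μ i).trans_eq (abs_norm μ).symm)
      _ = _ := by simp; ring
  calc ∫ ω, ‖g ω‖ ^ 2 ∂P = 4 * v * ∫ ω, ‖g ω‖ ^ 2 / (4 * v) ∂P := by
        rw [integral_div]; field_simp
    _ ≤ 4 * v * log (∫ ω, exp (‖g ω‖ ^ 2 / (4 * v)) ∂P) := by
        gcongr; exact integral_le_log_integral_exp hY hexpY
    _ ≤ 4 * v * log (√2 * Fintype.card ι * exp (‖μ‖ ^ 2 / (2 * v))) := by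
        gcongr
        · exact integral_exp_pos hexpY
        · exact (integral_mono hexpY (integrable_finsetSum Finset.univ fun i _ => hexp i)
            fun ω => exp_norm_sq_div_le_sum (g ω) _).trans hmoment
    _ = 4 * v * log (√2 * Fintype.card ι) + 2 * ‖μ‖ ^ 2 := by
        rw [log_mul (by positivity) (exp_pos _).ne', log_exp]
        field_simp; ring

end GaussianVector

theorem dqsg_excess_variance_gaussian_general
    {Ω : Type*} [MeasurableSpace Ω] (P : Measure Ω) [IsProbabilityMeasure P]
    (n : ℕ) (Δ : ℝ) (hΔ : 0 < Δ) (σ : ℝ) (hσ : 0 < σ)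
    (g e : Ω → (Fin n → ℝ)) (hg : Measurable g) (he : Measurable e)
    (μ : Fin n → ℝ)
    (hgLaw : ∀ i, Measure.map (fun ω => g ω i) P = gaussianReal (μ i) (Real.toNNReal (σ ^ 2)))
    (hindep : IndepFun g e P)
    (heLaw : ∀ i, Measure.map (fun ω => e ω i) P = uniformIcc (-(Δ / 2)) (Δ / 2)) :
    (∫ ω, ∑ i, (g ω i + ‖g ω‖ * e ω i - μ i) ^ 2 ∂P)
        - (∫ ω, ∑ i, (g ω i - μ i) ^ 2 ∂P)
      ≤ Δ ^ 2 / 3 * Real.log (Real.sqrt 2 * n) * (∫ ω, ∑ i, (g ω i - μ i) ^ 2 ∂P)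
        + n * Δ ^ 2 / 6 * ‖μ‖ ^ 2 := by
  obtain rfl | hn := n.eq_zero_or_pos
  · simp
  have : Nonempty (Fin n) := ⟨⟨0, hn⟩⟩
  have hv : (σ ^ 2).toNNReal ≠ 0 := by simpa using hσ.ne'
  have hvσ : ((σ ^ 2).toNNReal : ℝ) = σ ^ 2 := Real.coe_toNNReal _ (sq_nonneg σ)
  have hg_law i : HasLaw (fun ω => g ω i) (gaussianReal (μ i) (σ ^ 2).toNNReal) P :=
    ⟨by fun_prop, hgLaw i⟩
  have he_law i : HasLaw (fun ω => e ω i) (uniformIcc (-(Δ / 2)) (Δ / 2)) P :=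
    ⟨by fun_prop, heLaw i⟩
  have he₀ i : ∫ ω, e ω i ∂P = 0 := by
    rw [(he_law i).integral_eq, integral_id_uniformIcc_neg]
  have he₂ i : ∫ ω, e ω i ^ 2 ∂P = (Δ / 2) ^ 2 / 3 := by
    rw [← integral_sq_uniformIcc_neg (half_pos hΔ), ← (he_law i).integral_comp (by fun_prop)]
    rfl
  have hnorm := integral_norm_sq_le_of_hasLaw_gaussianReal hv hg_law
  rw [integral_sum_sq_add_norm_mul_of_indepFun hindep
      (fun i => (hg_law i).memLp_comp (memLp_id_gaussianReal 2))
      (fun i => (he_law i).memLp_comp (memLp_id_uniformIcc (by linarith))) he₀ he₂ μ,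
    integral_sum_sub_sq_of_hasLaw_gaussianReal hg_law]
  simp only [Fintype.card_fin, hvσ] at hnorm ⊢
  linarith [mul_le_mul_of_nonneg_left hnorm (by positivity : (0 : ℝ) ≤ n * (Δ / 2) ^ 2 / 3)]

/-- **Excess variance of dithered quantization under a Gaussian gradient model (Lemma 2, eq. (3)).**
If the coordinates of `g` are independent with `g_i ~ N(μ_i, σ²)`, and `e` is independent of `g`
with i.i.d. coordinates uniform on `[-Δ/2, Δ/2]`, then the DQSG `g̃ = g + ‖g‖_∞ • e` satisfies
`E[‖g̃ − μ‖₂²] − E[‖g − μ‖₂²] ≤ (Δ²/3)·ln(√2·n)·E[‖g − μ‖₂²] + (nΔ²/6)·‖μ‖_∞²`.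
(The norms `‖g ω‖`, `‖μ‖` on `Fin n → ℝ` are sup norms; squared Euclidean norms are sums of
squares.) -/
theorem dqsg_excess_variance_gaussian
    {Ω : Type*} [MeasurableSpace Ω] (P : Measure Ω) [IsProbabilityMeasure P]
    (n : ℕ) (Δ : ℝ) (hΔ : 0 < Δ) (σ : ℝ) (hσ : 0 < σ)
    (g e : Ω → (Fin n → ℝ)) (hg : Measurable g) (he : Measurable e)
    (μ : Fin n → ℝ)
    (hgIndep : iIndepFun (fun i ω => g ω i) P)
    (hgLaw : ∀ i, Measure.map (fun ω => g ω i) P = gaussianReal (μ i) (Real.toNNReal (σ ^ 2)))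
    (hindep : IndepFun g e P)
    (heIndep : iIndepFun (fun i ω => e ω i) P)
    (heLaw : ∀ i, Measure.map (fun ω => e ω i) P = uniformIcc (-(Δ / 2)) (Δ / 2)) :
    (∫ ω, ∑ i, (g ω i + ‖g ω‖ * e ω i - μ i) ^ 2 ∂P)
        - (∫ ω, ∑ i, (g ω i - μ i) ^ 2 ∂P)
      ≤ Δ ^ 2 / 3 * Real.log (Real.sqrt 2 * n) * (∫ ω, ∑ i, (g ω i - μ i) ^ 2 ∂P)
        + n * Δ ^ 2 / 6 * ‖μ‖ ^ 2 :=
  dqsg_excess_variance_gaussian_general P n Δ hΔ σ hσ g e hg he μ hgLaw hindep heLaw
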